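/- arXiv:2211.05466 — 2 statements merged into one kernel-verified Lean document; each statement's English description precedes it below -/
import Mathlib

section
/- In a bivariate binary distribution with marginal positive probabilities p1, q1 ∈ (0,1), if p1 > q1 and the discordant probabilities p10, p01 are strictly positive, then the correlation coefficient ρ satisfies ρ < sqrt(q1*(1-p1)/(p1*(1-q1))). -/
theorem stmt_1 (p11 p10 p01 p00 : ℝ)
    (h11 : 0 < p11) (h10 : 0 < p10) (h01 : 0 < p01) (h00 : 0 < p00)
    (hsum : p11 + p10 + p01 + p00 = 1)
    (p1 q1 : ℝ) (hp1 : p1 = p10 + p11) (hq1 : q1 = p01 + p11)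
    (hp1pos : 0 < p1) (hp1lt : p1 < 1) (hq1pos : 0 < q1) (hq1lt : q1 < 1)
    (hgt : p1 > q1)
    (ρ : ℝ) (hρ : ρ = (p11 - p1 * q1) / Real.sqrt (p1 * (1 - p1) * q1 * (1 - q1))) :
    ρ < Real.sqrt (q1 * (1 - p1) / (p1 * (1 - q1))) := by
  have hp1' : 0 < 1 - p1 := by linarith
  have hq1' : 0 < 1 - q1 := by linarith
  have hS2pos : 0 < p1 * (1 - p1) * q1 * (1 - q1) :=
    mul_pos (mul_pos (mul_pos hp1pos hp1') hq1pos) hq1' 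
  have hSpos : 0 < Real.sqrt (p1 * (1 - p1) * q1 * (1 - q1)) := Real.sqrt_pos.mpr hS2pos
  set S := Real.sqrt (p1 * (1 - p1) * q1 * (1 - q1)) with hS
  have hS2 : S ^ 2 = p1 * (1 - p1) * q1 * (1 - q1) := Real.sq_sqrt hS2pos.le
  have hkey : Real.sqrt (q1 * (1 - p1) / (p1 * (1 - q1))) = q1 * (1 - p1) / S := by
    rw [eq_div_iff hSpos.ne']
    have hx : q1 * (1 - p1) / (p1 * (1 - q1)) * S ^ 2 = (q1 * (1 - p1)) ^ 2 := by
      rw [hS2, div_mul_eq_mul_div, div_eq_iff (mul_pos hp1pos hq1').ne']; ring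
    have : Real.sqrt (q1 * (1 - p1) / (p1 * (1 - q1))) * S
        = Real.sqrt (q1 * (1 - p1) / (p1 * (1 - q1)) * S ^ 2) := by
      rw [Real.sqrt_mul (div_pos (mul_pos hq1pos hp1') (mul_pos hp1pos hq1')).le, Real.sqrt_sq hSpos.le]
    rw [this, hx, Real.sqrt_sq (by nlinarith : (0:ℝ) ≤ q1 * (1 - p1))]
  rw [hρ, hkey]
  rw [div_lt_div_iff_of_pos_right hSpos]
  nlinarith [h01]
end

section
/- For fixed n and 0 ≤ x < n, and p ∈ (0,1), the derivative of the binomial CDF satisfies dF/dp = [P(N ≤ x)(1 - P(N ≤ x))/(p(1-p))] · (E[N | N ≤ x] - E[N | N > x]), where N ~ Binomial(n, p). -/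
/-- The probability mass function of a Binomial(n, p) random variable at k. -/
def binomPMF (n : ℕ) (p : ℝ) (k : ℕ) : ℝ :=
  (n.choose k : ℝ) * p ^ k * (1 - p) ^ (n - k)

/-- The CDF of a Binomial(n, p) random variable evaluated at x. -/
def binomCDF (n x : ℕ) (p : ℝ) : ℝ :=
  ∑ k ∈ Finset.range (x + 1), (n.choose k : ℝ) * p ^ k * (1 - p) ^ (n - k)

/-! Each mass function satisfies the score identity `p (1 - p) ∂ₚ P(N = k) = (k - n p) P(N = k)`.
Summing it over `k ≤ x` gives `p (1 - p) F'(p) = E[N; N ≤ x] - n p P(N ≤ x)`, and writing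
`E[N; N > x] = n p - E[N; N ≤ x]`, `P(N > x) = 1 - P(N ≤ x)` turns the right-hand side into
`P(N ≤ x) P(N > x) (E[N | N ≤ x] - E[N | N > x])`. -/

open Finset

lemma sum_range_binomPMF (n : ℕ) (p : ℝ) : ∑ k ∈ range (n + 1), binomPMF n p k = 1 := by
  have h := add_pow p (1 - p) n
  rw [add_sub_cancel, one_pow] at h
  rw [h]
  exact sum_congr rfl fun k _ => by unfold binomPMF; ring

lemma sum_range_mul_binomPMF (n : ℕ) (p : ℝ) :
    ∑ k ∈ range (n + 1), (k : ℝ) * binomPMF n p k = n * p := by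
  cases n with
  | zero => simp
  | succ m =>
    have absorb : ∀ j ∈ range (m + 1),
        ((j + 1 : ℕ) : ℝ) * binomPMF (m + 1) p (j + 1) = (m + 1 : ℝ) * p * binomPMF m p j := by
      intro j _
      have hc : ((m + 1 : ℕ) : ℝ) * m.choose j = (m + 1).choose (j + 1) * ((j + 1 : ℕ) : ℝ) := by
        exact_mod_cast Nat.add_one_mul_choose_eq m j
      unfold binomPMF
      rw [Nat.add_sub_add_right]
      push_cast at hc ⊢
      linear_combination (p ^ (j + 1) * (1 - p) ^ (m - j)) * hc.symm
    rw [sum_range_succ', sum_congr rfl absorb, ← mul_sum, sum_range_binomPMF]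
    push_cast
    ring

lemma hasDerivAt_binomPMF (n k : ℕ) {p : ℝ} (hp0 : p ≠ 0) (hp1 : p ≠ 1) :
    HasDerivAt (fun q => binomPMF n q k) ((k - n * p) * binomPMF n p k / (p * (1 - p))) p := by
  by_cases hkn : n < k
  · have hzero : (fun q => binomPMF n q k) = fun _ => 0 := by
      funext q; simp [binomPMF, Nat.choose_eq_zero_of_lt hkn]
    simpa [hzero, binomPMF, Nat.choose_eq_zero_of_lt hkn] using hasDerivAt_const p (0 : ℝ)
  have hform :
      (fun q => binomPMF n q k) = fun q => (n.choose k : ℝ) * (q ^ k * (1 - q) ^ (n - k)) := by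
    funext q; simp only [binomPMF, mul_assoc]
  rw [hform]
  refine (((hasDerivAt_pow k p).fun_mul
    (((hasDerivAt_id' p).const_sub 1).fun_pow (n - k))).const_mul _).congr_deriv ?_
  have hq : (1 : ℝ) - p ≠ 0 := sub_ne_zero.mpr (Ne.symm hp1)
  -- `p ^ (k - 1) * p = p ^ k` and `(1 - p) ^ (n - k - 1) * (1 - p) = (1 - p) ^ (n - k)` hold
  -- despite truncated subtraction, because the coefficient `k` resp. `n - k` vanishes otherwise
  have hpk : (k : ℝ) * p ^ (k - 1) * p = k * p ^ k := by
    rcases Nat.eq_zero_or_pos k with rfl | hk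
    · simp
    · rw [mul_assoc, ← pow_succ, Nat.sub_add_cancel hk]
  have hqk :
      ((n - k : ℕ) : ℝ) * (1 - p) ^ (n - k - 1) * (1 - p) = (n - k : ℕ) * (1 - p) ^ (n - k) := by
    rcases Nat.eq_zero_or_pos (n - k) with h | h
    · simp [h]
    · rw [mul_assoc, ← pow_succ, Nat.sub_add_cancel h]
  rw [eq_div_iff (mul_ne_zero hp0 hq)]
  unfold binomPMF
  push_cast [Nat.cast_sub (not_lt.mp hkn)] at hqk ⊢
  linear_combination (n.choose k : ℝ) * ((1 - p) ^ (n - k) * (1 - p) * hpk - p ^ k * p * hqk)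

lemma hasDerivAt_binomCDF (n x : ℕ) {p : ℝ} (hp0 : p ≠ 0) (hp1 : p ≠ 1) :
    HasDerivAt (fun q => binomCDF n x q)
      ((∑ k ∈ range (x + 1), (k : ℝ) * binomPMF n p k
        - n * p * ∑ k ∈ range (x + 1), binomPMF n p k) / (p * (1 - p))) p := by
  refine (HasDerivAt.fun_sum fun k (_ : k ∈ range (x + 1)) =>
    hasDerivAt_binomPMF n k hp0 hp1).congr_deriv ?_
  rw [← sum_div, mul_sum, ← sum_sub_distrib]
  exact congrArg (· / _) (sum_congr rfl fun k _ => by ring)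

lemma sum_range_add_sum_Icc (f : ℕ → ℝ) {x n : ℕ} (hx : x ≤ n) :
    ∑ k ∈ range (x + 1), f k + ∑ k ∈ Icc (x + 1) n, f k = ∑ k ∈ range (n + 1), f k := by
  rw [← Ico_add_one_right_eq_Icc]
  exact sum_range_add_sum_Ico f (by omega)

theorem stmt_16 (n x : ℕ) (p : ℝ) (hp0 : 0 < p) (hp1 : p < 1) (hx : x < n)
    (Ple Pgt Ele Egt : ℝ)
    (hPle : Ple = ∑ k ∈ Finset.range (x + 1), binomPMF n p k)
    (hPgt : Pgt = ∑ k ∈ Finset.Icc (x + 1) n, binomPMF n p k)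
    (hPle0 : 0 < Ple) (hPle1 : Ple < 1)
    (hEle : Ele = (∑ k ∈ Finset.range (x + 1), (k : ℝ) * binomPMF n p k) / Ple)
    (hEgt : Egt = (∑ k ∈ Finset.Icc (x + 1) n, (k : ℝ) * binomPMF n p k) / Pgt) :
    HasDerivAt (fun q : ℝ => binomCDF n x q)
      (Ple * (1 - Ple) / (p * (1 - p)) * (Ele - Egt)) p := by
  set Sle := ∑ k ∈ range (x + 1), (k : ℝ) * binomPMF n p k
  have hPgt' : Pgt = 1 - Ple := by
    rw [hPgt, hPle, eq_sub_iff_add_eq', sum_range_add_sum_Icc _ hx.le, sum_range_binomPMF]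
  have hSgt : ∑ k ∈ Icc (x + 1) n, (k : ℝ) * binomPMF n p k = n * p - Sle := by
    rw [eq_sub_iff_add_eq', sum_range_add_sum_Icc _ hx.le, sum_range_mul_binomPMF]
  have hderiv := hasDerivAt_binomCDF n x hp0.ne' hp1.ne
  rw [← hPle] at hderiv
  convert hderiv using 1
  rw [hEle, hEgt, hPgt', hSgt]
  have hPle1' : (1 : ℝ) - Ple ≠ 0 := by linarith
  field_simp
  ring
end
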